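/- Suppose G is a SISO LTI system whose zero-initial-condition length-L' behavior is y = T_{L'}(g) u, and the controller K acts as u = T_{L'}(a) e in the standard feedback loop e = r - z, z = T_{L'}(g) u, with 1 + g_0 a_0 ≠ 0. Then for any plant trajectory (û, ŷ) of length L' with zero initial condition, the pair (r, z) defined by r = û + T_{L'}(a) ŷ and z = T_{L'}(a) ŷ is a closed-loop trajectory from reference to output with zero initial conditions; conversely every zero-initial-condition closed-loop trajectory (r, z) arises this way from some plant trajectory. -/

import Mathlib

/-- Lower-triangular Toeplitz matrix of a sequence `a` of length `L`. -/
def toep (L : ℕ) (a : Fin L → ℝ) : Matrix (Fin L) (Fin L) ℝ :=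
  Matrix.of fun i j =>
    if _ : (j : ℕ) ≤ (i : ℕ) then
      a ⟨(i : ℕ) - (j : ℕ), Nat.lt_of_le_of_lt (Nat.sub_le _ _) i.isLt⟩
    else 0

/-!
Lower-triangular Toeplitz matrices of size `L` are exactly the polynomials in the nilpotent lower
shift matrix, so any two of them commute. Hence a plant trajectory `ŷ = T(g) û` gives
`T(a) ŷ = T(g) T(a) û`, which is the closed-loop equation with error `û`; conversely a closed-loop
trajectory comes from the plant trajectory driven by its error signal `r - z`.
-/

open Matrix

section LowerShift

variable (R : Type*) [Semiring R] (L : ℕ)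

def lowerShift : Matrix (Fin L) (Fin L) R :=
  Matrix.of fun i j => if (j : ℕ) + 1 = i then 1 else 0

variable {R L}

theorem lowerShift_pow_apply (d : ℕ) (i j : Fin L) :
    (lowerShift R L ^ d) i j = if (j : ℕ) + d = i then 1 else 0 := by
  induction d generalizing j with
  | zero => simp [one_apply, Fin.ext_iff, eq_comm]
  | succ d ih =>
    simp only [pow_succ, mul_apply, ih]
    simp only [lowerShift, of_apply, mul_ite, mul_one, mul_zero]
    rw [Fin.sum_univ_eq_sum_range (fun k => if (j : ℕ) + 1 = k then
      (if k + d = (i : ℕ) then (1 : R) else 0) else 0), Finset.sum_ite_eq]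
    simp only [Finset.mem_range]
    have := i.isLt
    split_ifs <;> first | rfl | omega

end LowerShift

theorem toep_eq_sum_smul_lowerShift_pow (L : ℕ) (a : Fin L → ℝ) :
    toep L a = ∑ d : Fin L, a d • lowerShift ℝ L ^ (d : ℕ) := by
  ext i j
  simp only [toep, of_apply, Matrix.sum_apply, Matrix.smul_apply, lowerShift_pow_apply,
    smul_eq_mul, mul_ite, mul_one, mul_zero]
  split_ifs with hji
  · rw [Fintype.sum_eq_single ⟨i - j, by omega⟩
      fun d hd => if_neg fun h => hd (Fin.ext (by simp only; omega))]
    simp [Nat.add_sub_cancel' hji]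
  · exact (Finset.sum_eq_zero fun d _ => if_neg (by omega)).symm

theorem toep_commute (L : ℕ) (g a : Fin L → ℝ) : Commute (toep L g) (toep L a) := by
  rw [toep_eq_sum_smul_lowerShift_pow, toep_eq_sum_smul_lowerShift_pow]
  exact Commute.sum_left _ _ _ fun d _ => Commute.sum_right _ _ _ fun e _ =>
    ((Commute.pow_pow_self _ _ _).smul_left _).smul_right _

theorem stmt12_general (L' : ℕ) (g a : Fin L' → ℝ) :
    (∀ uh yh : Fin L' → ℝ, yh = (toep L' g).mulVec uh →
      (toep L' a).mulVec yh =
        (toep L' g * toep L' a).mulVec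
          ((uh + (toep L' a).mulVec yh) - (toep L' a).mulVec yh)) ∧
    (∀ r z : Fin L' → ℝ, z = (toep L' g * toep L' a).mulVec (r - z) →
      ∃ uh yh : Fin L' → ℝ, yh = (toep L' g).mulVec uh ∧
        r = uh + (toep L' a).mulVec yh ∧ z = (toep L' a).mulVec yh) := by
  refine ⟨fun uh yh hy => ?_, fun r z hz => ?_⟩
  · rw [add_sub_cancel_right, hy, mulVec_mulVec, (toep_commute L' g a).eq]
  · have hKy : (toep L' a).mulVec ((toep L' g).mulVec (r - z)) = z := by
      rw [mulVec_mulVec, ← (toep_commute L' g a).eq, ← hz]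
    exact ⟨r - z, _, rfl, by rw [hKy, sub_add_cancel], hKy.symm⟩

/-- Parametrization of all zero-initial-condition closed-loop trajectories `(r, z)`
of the well-posed feedback loop with plant `T(g)` and controller `T(a)`:
every plant trajectory `(û, ŷ)` (i.e. `ŷ = T(g) û`) yields the closed-loop trajectory
`r = û + T(a) ŷ`, `z = T(a) ŷ`, and conversely every zero-initial-condition
closed-loop trajectory arises this way. -/
theorem stmt12 (L' : ℕ) (hL : 0 < L') (g a : Fin L' → ℝ)
    (h : 1 + g ⟨0, hL⟩ * a ⟨0, hL⟩ ≠ 0) :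
    (∀ uh yh : Fin L' → ℝ, yh = (toep L' g).mulVec uh →
      (toep L' a).mulVec yh =
        (toep L' g * toep L' a).mulVec
          ((uh + (toep L' a).mulVec yh) - (toep L' a).mulVec yh)) ∧
    (∀ r z : Fin L' → ℝ, z = (toep L' g * toep L' a).mulVec (r - z) →
      ∃ uh yh : Fin L' → ℝ, yh = (toep L' g).mulVec uh ∧
        r = uh + (toep L' a).mulVec yh ∧ z = (toep L' a).mulVec yh) :=
  stmt12_general L' g a
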